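/- arXiv:1504.07328 — 4 statements merged into one kernel-verified Lean document; each statement's English description precedes it below -/
import Mathlib

section
/- In the preferential attachment model, the process M_{n+1} := (N_{n+1}(1) − ν_{n+1}) / ∏_{j=1}^n w_j, n ≥ 1, is a martingale with respect to the filtration (F_{n+1}), where ν_n = E(N_n(1)), γ = (1+δ)/(2+δ), and w_j = j/(j+γ). -/
open MeasureTheory ProbabilityTheory Filter Finset

/-- The undirected preferential attachment model with parameter `δ > -1`.
`C n` is the node that node `n+1` attaches to (`0` meaning a self-loop),
`D n v` is the degree of node `v` in the graph `G n`, and `F` is the filtration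
generated by the evolution of the graph. -/
structure PAModel {Ω : Type} (mΩ : MeasurableSpace Ω) (μ : Measure Ω) (δ : ℝ) : Type where
  F : Filtration ℕ mΩ
  C : ℕ → Ω → ℕ
  D : ℕ → ℕ → Ω → ℕ
  C_le : ∀ n ω, 1 ≤ n → C n ω ≤ n
  C_meas : ∀ n, Measurable[F (n + 1)] (C n)
  D_one_one : ∀ ω, D 1 1 ω = 2
  D_one_ne : ∀ v ω, v ≠ 1 → D 1 v ω = 0
  D_meas : ∀ n v, Measurable[F n] (D n v)
  D_succ_old : ∀ n v ω, 1 ≤ v → v ≤ n →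
    D (n + 1) v ω = D n v ω + if C n ω = v then 1 else 0
  D_succ_new : ∀ n ω, 1 ≤ n → D (n + 1) (n + 1) ω = if C n ω = 0 then 2 else 1
  D_succ_out : ∀ n v ω, n + 1 < v → D (n + 1) v ω = 0
  attach_prob : ∀ n v, 1 ≤ v → v ≤ n →
    μ[Set.indicator {ω | C n ω = v} (fun _ => (1 : ℝ)) | F n]
      =ᵐ[μ] fun ω => ((D n v ω : ℝ) + δ) / (n * (2 + δ) + (1 + δ))
  self_prob : ∀ n, 1 ≤ n →
    μ[Set.indicator {ω | C n ω = 0} (fun _ => (1 : ℝ)) | F n]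
      =ᵐ[μ] fun _ => (1 + δ) / (n * (2 + δ) + (1 + δ))

namespace PAModel

variable {Ω : Type} {mΩ : MeasurableSpace Ω} {μ : Measure Ω} {δ : ℝ}

/-- `N n k` is the number of nodes of degree `k` in the graph `G n`. -/
noncomputable def N (M : PAModel mΩ μ δ) (n k : ℕ) (ω : Ω) : ℝ :=
  ((Finset.Icc 1 n).filter (fun v => M.D n v ω = k)).card

end PAModel

/-!
Write `N_{n+1}(1) = N_n(1) - L_n + (1 - S_n)`, where `L_n` indicates that node `n + 1` attaches
to a leaf (which then gets degree two) and `S_n` that it carries a self-loop. Given `F_n`, each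
leaf is hit with probability `(1 + δ) / c_n`, `c_n = n (2 + δ) + 1 + δ`, and so is the self-loop,
so `E[N_{n+1}(1) | F_n] = w_n (N_n(1) + 1)` with `w_n = 1 - (1 + δ) / c_n = n / (n + γ)`.
Taking expectations, `ν_{n+1} = w_n (ν_n + 1)`, so the centred count is multiplied by `w_n` in
conditional mean at each step, and dividing by `∏ w_j` turns it into a martingale.
-/

section AffineDrift

variable {Ω : Type*} {m0 : MeasurableSpace Ω} {μ : Measure Ω} [IsProbabilityMeasure μ]
  {ℱ : Filtration ℕ m0} {X : ℕ → Ω → ℝ} {a b : ℕ → ℝ}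

theorem integral_succ_of_condExp_affine (hint : ∀ n, Integrable (X n) μ)
    (hX : ∀ n, μ[X (n + 1) | ℱ n] =ᵐ[μ] fun ω => a n * X n ω + b n) (n : ℕ) :
    ∫ ω, X (n + 1) ω ∂μ = a n * ∫ ω, X n ω ∂μ + b n := by
  rw [← integral_condExp (ℱ.le n), integral_congr_ae (hX n),
    integral_add ((hint n).const_mul _) (integrable_const _), integral_const_mul]
  simp

theorem martingale_of_condExp_affine {P : ℕ → ℝ} (hadp : StronglyAdapted ℱ X)
    (hint : ∀ n, Integrable (X n) μ)
    (hX : ∀ n, μ[X (n + 1) | ℱ n] =ᵐ[μ] fun ω => a n * X n ω + b n)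
    (hP : ∀ n, P n ≠ 0) (hP_succ : ∀ n, P (n + 1) = P n * a n) :
    Martingale (fun n ω => (X n ω - ∫ ω', X n ω' ∂μ) / P n) ℱ μ := by
  refine martingale_nat (fun n => ?_) (fun n => ((hint n).sub (integrable_const _)).div_const _)
    (fun n => ?_)
  · exact (((hadp n).measurable.sub_const _).div_const _).stronglyMeasurable
  have ha : a n ≠ 0 := right_ne_zero_of_mul (hP_succ n ▸ hP (n + 1))
  have hcentred : μ[X (n + 1) - fun _ => ∫ ω, X (n + 1) ω ∂μ | ℱ n]
      =ᵐ[μ] fun ω => a n * (X n ω - ∫ ω', X n ω' ∂μ) := by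
    filter_upwards [condExp_sub (hint (n + 1)) (integrable_const _) (ℱ n), hX n] with ω h1 h2
    rw [h1, Pi.sub_apply, h2, condExp_const (ℱ.le n), integral_succ_of_condExp_affine hint hX]
    ring
  have hscaled : (fun ω => (X (n + 1) ω - ∫ ω', X (n + 1) ω' ∂μ) / P (n + 1))
      = (P (n + 1))⁻¹ • (X (n + 1) - fun _ => ∫ ω, X (n + 1) ω ∂μ) := by
    ext ω
    simp [div_eq_inv_mul]
  rw [hscaled]
  filter_upwards [condExp_smul (P (n + 1))⁻¹ (X (n + 1) - fun _ => ∫ ω, X (n + 1) ω ∂μ) (ℱ n),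
    hcentred] with ω h1 h2
  rw [h1, Pi.smul_apply, h2, hP_succ, smul_eq_mul]
  field_simp [hP n, ha]

end AffineDrift

namespace PAModel

variable {Ω : Type} {mΩ : MeasurableSpace Ω} {μ : Measure Ω} {δ : ℝ} (M : PAModel mΩ μ δ)

theorem one_le_D {n v : ℕ} (ω : Ω) (hv : 1 ≤ v) (hvn : v ≤ n) : 1 ≤ M.D n v ω := by
  induction n with
  | zero => omega
  | succ n ih =>
    rcases Nat.eq_zero_or_pos n with rfl | hn
    · obtain rfl : v = 1 := by omega
      rw [M.D_one_one]
      omega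
    rcases hvn.lt_or_eq with hvn | rfl
    · rw [M.D_succ_old n v ω hv (by omega)]
      exact (ih (by omega)).trans (Nat.le_add_right _ _)
    · rw [M.D_succ_new n ω hn]
      split <;> omega

theorem N_eq_sum (n k : ℕ) (ω : Ω) :
    M.N n k ω = ∑ v ∈ Icc 1 n, if M.D n v ω = k then (1 : ℝ) else 0 := by
  rw [N, card_filter]
  push_cast
  rfl

theorem measurable_N (n k : ℕ) : Measurable[M.F n] (M.N n k) := by
  simp_rw [funext (M.N_eq_sum n k)]
  exact Finset.measurable_sum _ fun v _ =>
    Measurable.ite (M.D_meas n v (measurableSet_singleton k)) measurable_const measurable_const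

theorem integrable_N [IsFiniteMeasure μ] (n k : ℕ) : Integrable (M.N n k) μ := by
  refine Integrable.of_mem_Icc 0 n ((M.measurable_N n k).mono (M.F.le n) le_rfl).aemeasurable
    (ae_of_all _ fun ω => ⟨Nat.cast_nonneg _, ?_⟩)
  rw [N]
  exact_mod_cast (card_filter_le _ _).trans (Nat.card_Icc 1 n).le

noncomputable def attachInd (n v : ℕ) : Ω → ℝ :=
  Set.indicator {ω | M.C n ω = v} fun _ => 1

theorem integrable_attachInd [IsFiniteMeasure μ] (n v : ℕ) : Integrable (M.attachInd n v) μ :=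
  (integrable_const 1).indicator (M.F.le (n + 1) _ (M.C_meas n (measurableSet_singleton v)))

def leafInd (n v : ℕ) (ω : Ω) : ℝ :=
  if M.D n v ω = 1 then 1 else 0

theorem measurable_leafInd (n v : ℕ) : Measurable[M.F n] (M.leafInd n v) :=
  Measurable.ite (M.D_meas n v (measurableSet_singleton 1)) measurable_const measurable_const

theorem N_one_eq_sum_leafInd (n : ℕ) (ω : Ω) : M.N n 1 ω = ∑ v ∈ Icc 1 n, M.leafInd n v ω :=
  M.N_eq_sum n 1 ω

noncomputable def attachToLeaf (n : ℕ) : Ω → ℝ :=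
  ∑ v ∈ Icc 1 n, M.leafInd n v * M.attachInd n v

theorem N_one_succ {n : ℕ} (hn : 1 ≤ n) :
    M.N (n + 1) 1 = M.N n 1 - M.attachToLeaf n + (1 - M.attachInd n 0) := by
  ext ω
  have hold : ∀ v ∈ Icc 1 n,
      M.leafInd (n + 1) v ω = M.leafInd n v ω - M.leafInd n v ω * M.attachInd n v ω := by
    intro v hv
    obtain ⟨hv1, hvn⟩ := mem_Icc.mp hv
    have hD : M.D n v ω ≠ 0 := Nat.one_le_iff_ne_zero.mp (M.one_le_D ω hv1 hvn)
    by_cases hc : M.C n ω = v <;> simp [leafInd, attachInd, M.D_succ_old n v ω hv1 hvn, hc, hD]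
  have hnew : M.leafInd (n + 1) (n + 1) ω = 1 - M.attachInd n 0 ω := by
    by_cases hc : M.C n ω = 0 <;> simp [leafInd, attachInd, M.D_succ_new n ω hn, hc]
  simp only [Pi.add_apply, Pi.sub_apply, Pi.one_apply, attachToLeaf, Finset.sum_apply,
    Pi.mul_apply, N_one_eq_sum_leafInd]
  rw [sum_Icc_succ_top (by omega), sum_congr rfl hold, hnew, sum_sub_distrib]

theorem integrable_leafInd_mul_attachInd [IsFiniteMeasure μ] (n v : ℕ) :
    Integrable (M.leafInd n v * M.attachInd n v) μ := by
  refine (M.integrable_attachInd n v).bdd_mul (c := 1)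
    ((M.measurable_leafInd n v).mono (M.F.le n) le_rfl).aestronglyMeasurable
    (ae_of_all _ fun ω => ?_)
  unfold leafInd
  split <;> simp

theorem integrable_attachToLeaf [IsFiniteMeasure μ] (n : ℕ) :
    Integrable (M.attachToLeaf n) μ :=
  integrable_finsetSum' _ fun v _ => M.integrable_leafInd_mul_attachInd n v

theorem condExp_attachToLeaf [IsFiniteMeasure μ] (n : ℕ) :
    μ[M.attachToLeaf n | M.F n]
      =ᵐ[μ] fun ω => (1 + δ) / (n * (2 + δ) + (1 + δ)) * M.N n 1 ω := by
  have hterm : ∀ᵐ ω ∂μ, ∀ v ∈ Icc 1 n, μ[M.leafInd n v * M.attachInd n v | M.F n] ω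
      = (1 + δ) / (n * (2 + δ) + (1 + δ)) * M.leafInd n v ω := by
    refine (eventually_all_finset _).mpr fun v hv => ?_
    obtain ⟨hv1, hvn⟩ := mem_Icc.mp hv
    filter_upwards [condExp_mul_of_stronglyMeasurable_left
      (M.measurable_leafInd n v).stronglyMeasurable
      (M.integrable_leafInd_mul_attachInd n v) (M.integrable_attachInd n v),
      M.attach_prob n v hv1 hvn] with ω hpull hprob
    rw [hpull, Pi.mul_apply, attachInd, hprob, leafInd]
    split_ifs with hD
    · rw [hD]; push_cast; ring
    · simp
  filter_upwards [condExp_finsetSum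
    (fun v _ => M.integrable_leafInd_mul_attachInd n v) (M.F n), hterm] with ω hsum hω
  rw [attachToLeaf, hsum, Finset.sum_apply, sum_congr rfl hω, ← mul_sum, N_one_eq_sum_leafInd]

theorem condExp_N_one_succ [IsFiniteMeasure μ] (hδ : -1 < δ) {n : ℕ} (hn : 1 ≤ n) :
    μ[M.N (n + 1) 1 | M.F n] =ᵐ[μ] fun ω =>
      n / (n + (1 + δ) / (2 + δ)) * M.N n 1 ω + n / (n + (1 + δ) / (2 + δ)) := by
  have hNint := M.integrable_N n 1
  have hleaf := M.integrable_attachToLeaf n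
  have hself := M.integrable_attachInd n 0
  have hone : Integrable (1 : Ω → ℝ) μ := integrable_const 1
  have hone_condExp : μ[(1 : Ω → ℝ) | M.F n] = 1 := condExp_const (M.F.le n) 1
  rw [M.N_one_succ hn]
  filter_upwards [condExp_add (hNint.sub hleaf) (hone.sub hself) (M.F n),
    condExp_sub hNint hleaf (M.F n), condExp_sub hone hself (M.F n),
    M.condExp_attachToLeaf n, M.self_prob n hn] with ω h_add h_sub h_sub' h_leaf h_self
  rw [h_add, Pi.add_apply, h_sub, h_sub', Pi.sub_apply, Pi.sub_apply, h_leaf, hone_condExp,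
    condExp_of_stronglyMeasurable (M.F.le n) (M.measurable_N n 1).stronglyMeasurable hNint,
    Pi.one_apply, attachInd, h_self]
  have h2δ : 0 < 2 + δ := by linarith
  have hc : 0 < n * (2 + δ) + (1 + δ) := by
    have := mul_nonneg n.cast_nonneg h2δ.le
    linarith
  field_simp
  ring

end PAModel

/-- In the preferential attachment model, the process
`M_{n+1} = (N_{n+1}(1) − ν_{n+1}) / ∏_{j=1}^n w_j`, `n ≥ 1`, is a martingale with
respect to the filtration `(F_{n+1})`, where `ν_n = E(N_n(1))`, `γ = (1+δ)/(2+δ)`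
and `w_j = j/(j+γ)`.  (The Lean index `m` corresponds to `n = m + 1 ≥ 1`.) -/
theorem martingale_N_one {Ω : Type} {mΩ : MeasurableSpace Ω} {μ : Measure Ω}
    [IsProbabilityMeasure μ] {δ : ℝ} (hδ : -1 < δ) (M : PAModel mΩ μ δ) :
    Martingale
      (fun m ω =>
        (M.N (m + 2) 1 ω - ∫ ω', M.N (m + 2) 1 ω' ∂μ)
          / ∏ j ∈ Finset.Icc 1 (m + 1), ((j : ℝ) / (j + (1 + δ) / (2 + δ))))
      ⟨fun m => M.F (m + 2), fun i j hij => M.F.mono (by omega),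
        fun m => M.F.le (m + 2)⟩ μ := by
  have hγ : 0 < (1 + δ) / (2 + δ) := div_pos (by linarith) (by linarith)
  refine martingale_of_condExp_affine (fun m => (M.measurable_N (m + 2) 1).stronglyMeasurable)
    (fun m => M.integrable_N (m + 2) 1) (fun m => M.condExp_N_one_succ hδ (by omega))
    (fun m => prod_ne_zero_iff.mpr fun j hj => ?_) (fun m => prod_Icc_succ_top (by omega) _)
  have hj : (0 : ℝ) < j := by exact_mod_cast (mem_Icc.mp hj).1
  positivity
end

section
/- Fix δ > −1 and k ≥ 1, and define a_n^{(k)} = [∏_{i=k}^{n−1} (1 − (k+δ)/(i(2+δ)+1+δ))]^{−1} for n ≥ k (with a_k^{(k)} = 1). Then a_n^{(k)} = Γ(n + (1+δ)/(2+δ)) Γ(k + (1−k)/(2+δ)) / (Γ(k + (1+δ)/(2+δ)) Γ(n + (1−k)/(2+δ))), and a_n^{(k)} ∼ [Γ(k + (1−k)/(2+δ)) / Γ(k + (1+δ)/(2+δ))] · n^{(k+δ)/(2+δ)} as n → ∞. -/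
/-!
With `x = (1+δ)/(2+δ)` and `y = (1-k)/(2+δ)`, the `i`-th factor of the product is
`(i + y)/(i + x)`, so by `Γ(s+1) = s Γ(s)` the product is a ratio of Gamma values. The
asymptotics is then Wendel's limit `Γ(n+x)/Γ(n+y) ∼ n^(x-y)`, a consequence of Euler's limit
formula for `Γ`.
-/

open Filter Finset Asymptotics

noncomputable def aseq (δ : ℝ) (k n : ℕ) : ℝ :=
  (∏ i ∈ Finset.Ico k n, (1 - ((k : ℝ) + δ) / (i * (2 + δ) + 1 + δ)))⁻¹

namespace Real

theorem Gamma_natCast_add_eq_mul_prod_Ico {s : ℝ} {k n : ℕ} (hks : 0 < k + s) (hkn : k ≤ n) :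
    Gamma (n + s) = Gamma (k + s) * ∏ i ∈ Ico k n, ((i : ℝ) + s) := by
  induction n, hkn using Nat.le_induction with
  | base => simp
  | succ n hkn ih =>
    have hns : 0 < (n : ℝ) + s := by
      have : (k : ℝ) ≤ n := by exact_mod_cast hkn
      linarith
    rw [Nat.cast_succ, add_right_comm, Gamma_add_one hns.ne', ih, prod_Ico_succ_top hkn]
    ring

theorem inv_prod_Ico_div_eq_Gamma {x y : ℝ} {k n : ℕ} (hkx : 0 < k + x) (hky : 0 < k + y)
    (hkn : k ≤ n) :
    (∏ i ∈ Ico k n, (((i : ℝ) + y) / ((i : ℝ) + x)))⁻¹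
      = Gamma (n + x) * Gamma (k + y) / (Gamma (k + x) * Gamma (n + y)) := by
  have hGx := (Gamma_pos_of_pos hkx).ne'
  have hGy := (Gamma_pos_of_pos hky).ne'
  have hPy : ∏ i ∈ Ico k n, ((i : ℝ) + y) ≠ 0 := by
    refine prod_ne_zero_iff.2 fun i hi => ?_
    have : (k : ℝ) ≤ i := by exact_mod_cast (mem_Ico.1 hi).1
    linarith
  rw [Gamma_natCast_add_eq_mul_prod_Ico hkx hkn, Gamma_natCast_add_eq_mul_prod_Ico hky hkn,
    prod_div_distrib]
  field_simp

/-- Euler's limit formula `GammaSeq s n → Γ(s)`, using `∏_{j ≤ n} (s + j) = Γ(n+1+s)/Γ(s)`. -/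
theorem isEquivalent_Gamma_natCast_add_one_add {s : ℝ} (hs : 0 < s) :
    (fun n : ℕ => Gamma (n + 1 + s)) ~[atTop] fun n => (n : ℝ) ^ s * n.factorial := by
  have hGs := (Gamma_pos_of_pos hs).ne'
  refine (isEquivalent_of_tendsto_one ?_).symm
  have h := (GammaSeq_tendsto_Gamma s).div_const (Gamma s)
  rw [div_self hGs] at h
  refine h.congr fun n => ?_
  have hprod : ∏ j ∈ range (n + 1), (s + j) = Gamma (n + 1 + s) / Gamma s := by
    have := Gamma_natCast_add_eq_mul_prod_Ico (k := 0) (s := s) (by simpa using hs)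
      (Nat.zero_le (n + 1))
    push_cast at this
    rw [eq_div_iff hGs, this, range_eq_Ico]
    simp only [zero_add, add_comm s]
    ring
  rw [GammaSeq, hprod, Pi.div_apply]
  field_simp

theorem isEquivalent_natCast_sub (m : ℕ) :
    (fun n : ℕ => ((n - m : ℕ) : ℝ)) ~[atTop] fun n => (n : ℝ) := by
  refine EventuallyEq.trans_isEquivalent ?_ <|
    IsEquivalent.refl.add_const_of_norm_tendsto_atTop (c := -(m : ℝ)) ?_
  · filter_upwards [eventually_ge_atTop m] with n hmn
    rw [Nat.cast_sub hmn, sub_eq_add_neg]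
  · exact tendsto_norm_atTop_atTop.comp tendsto_natCast_atTop_atTop

/-- Shifting `n` by an integer `m` reduces Wendel's limit to the case `x, y > 0`, where Euler's
limit formula applies. -/
theorem isEquivalent_Gamma_natCast_add_div (x y : ℝ) :
    (fun n : ℕ => Gamma (n + x) / Gamma (n + y)) ~[atTop] fun n => (n : ℝ) ^ (x - y) := by
  obtain ⟨m, hm⟩ := exists_nat_gt (max (1 - x) (1 - y))
  have hs : 0 < x + m - 1 := by linarith [le_max_left (1 - x) (1 - y)]
  have ht : 0 < y + m - 1 := by linarith [le_max_right (1 - x) (1 - y)]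
  have hpos : (fun n : ℕ => Gamma (n + 1 + (x + m - 1)) / Gamma (n + 1 + (y + m - 1)))
      ~[atTop] fun n => (n : ℝ) ^ (x - y) := by
    refine ((isEquivalent_Gamma_natCast_add_one_add hs).div
      (isEquivalent_Gamma_natCast_add_one_add ht)).trans_eventuallyEq ?_
    filter_upwards [eventually_ge_atTop 1] with n hn
    have hn0 : (0 : ℝ) < n := by exact_mod_cast hn
    have hf : (0 : ℝ) < n.factorial := by positivity
    rw [Pi.div_apply, mul_div_mul_right _ _ hf.ne', ← rpow_sub hn0]
    ring_nf
  refine EventuallyEq.trans_isEquivalent ?_ <| (hpos.comp_tendsto (tendsto_sub_atTop_nat m)).trans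
    ((isEquivalent_natCast_sub m).rpow (fun n => by positivity))
  filter_upwards [eventually_ge_atTop m] with n hmn
  simp only [Function.comp_apply, Nat.cast_sub hmn]
  ring_nf

end Real

open Real

theorem one_sub_div_eq_add_div_add {δ : ℝ} (hδ : -1 < δ) (k i : ℕ) :
    1 - ((k : ℝ) + δ) / (i * (2 + δ) + 1 + δ)
      = (i + (1 - (k : ℝ)) / (2 + δ)) / (i + (1 + δ) / (2 + δ)) := by
  have h2 : 0 < 2 + δ := by linarith
  have hi : (i : ℝ) * (2 + δ) + 1 + δ ≠ 0 := by nlinarith [(i.cast_nonneg : (0 : ℝ) ≤ i)]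
  rw [show (i : ℝ) + (1 - k) / (2 + δ) = (i * (2 + δ) + 1 - k) / (2 + δ) by field_simp; ring,
    show (i : ℝ) + (1 + δ) / (2 + δ) = (i * (2 + δ) + 1 + δ) / (2 + δ) by field_simp; ring,
    div_div_div_cancel_right₀ h2.ne', eq_div_iff hi]
  field_simp
  ring

theorem natCast_add_one_add_div_two_add_pos {δ : ℝ} (hδ : -1 < δ) (k : ℕ) :
    0 < (k : ℝ) + (1 + δ) / (2 + δ) := by
  have := div_pos (show 0 < 1 + δ by linarith) (show 0 < 2 + δ by linarith)
  positivity

theorem natCast_add_one_sub_div_two_add_pos {δ : ℝ} (hδ : -1 < δ) (k : ℕ) :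
    0 < (k : ℝ) + (1 - (k : ℝ)) / (2 + δ) := by
  have h2 : 0 < 2 + δ := by linarith
  rw [show (k : ℝ) + (1 - k) / (2 + δ) = (k * (1 + δ) + 1) / (2 + δ) by field_simp; ring]
  exact div_pos (by nlinarith [(k.cast_nonneg : (0 : ℝ) ≤ k)]) h2

theorem aseq_eq_Gamma {δ : ℝ} (hδ : -1 < δ) {k n : ℕ} (hkn : k ≤ n) :
    aseq δ k n
      = Gamma (n + (1 + δ) / (2 + δ)) * Gamma (k + (1 - (k : ℝ)) / (2 + δ))
        / (Gamma (k + (1 + δ) / (2 + δ)) * Gamma (n + (1 - (k : ℝ)) / (2 + δ))) := by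
  rw [aseq, ← inv_prod_Ico_div_eq_Gamma (natCast_add_one_add_div_two_add_pos hδ k)
    (natCast_add_one_sub_div_two_add_pos hδ k) hkn]
  simp only [one_sub_div_eq_add_div_add hδ]

theorem aseq_isEquivalent {δ : ℝ} (hδ : -1 < δ) (k : ℕ) :
    aseq δ k ~[atTop] fun n =>
      Gamma (k + (1 - (k : ℝ)) / (2 + δ)) / Gamma (k + (1 + δ) / (2 + δ))
        * (n : ℝ) ^ (((k : ℝ) + δ) / (2 + δ)) := by
  have hα : (1 + δ) / (2 + δ) - (1 - (k : ℝ)) / (2 + δ) = (k + δ) / (2 + δ) := by ring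
  have h := (IsEquivalent.refl (u := fun _ : ℕ =>
      Gamma (k + (1 - (k : ℝ)) / (2 + δ)) / Gamma (k + (1 + δ) / (2 + δ)))).mul
    (isEquivalent_Gamma_natCast_add_div ((1 + δ) / (2 + δ)) ((1 - (k : ℝ)) / (2 + δ)))
  rw [hα] at h
  refine EventuallyEq.trans_isEquivalent ?_ h
  filter_upwards [eventually_ge_atTop k] with n hkn
  rw [aseq_eq_Gamma hδ hkn, Pi.mul_apply]
  ring

theorem aseq_gamma_and_asymp_general (δ : ℝ) (hδ : -1 < δ) (k : ℕ) :
    (∀ n : ℕ, k ≤ n →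
      aseq δ k n
        = Real.Gamma (n + (1 + δ) / (2 + δ)) * Real.Gamma (k + (1 - (k : ℝ)) / (2 + δ))
          / (Real.Gamma (k + (1 + δ) / (2 + δ)) * Real.Gamma (n + (1 - (k : ℝ)) / (2 + δ)))) ∧
    Tendsto
      (fun n : ℕ =>
        aseq δ k n
          / ((Real.Gamma (k + (1 - (k : ℝ)) / (2 + δ)) / Real.Gamma (k + (1 + δ) / (2 + δ)))
              * (n : ℝ) ^ (((k : ℝ) + δ) / (2 + δ))))
      atTop (nhds 1) := by
  refine ⟨fun n hkn => aseq_eq_Gamma hδ hkn, ?_⟩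
  have hC : 0 < Gamma (k + (1 - (k : ℝ)) / (2 + δ)) / Gamma (k + (1 + δ) / (2 + δ)) :=
    div_pos (Gamma_pos_of_pos (natCast_add_one_sub_div_two_add_pos hδ k))
      (Gamma_pos_of_pos (natCast_add_one_add_div_two_add_pos hδ k))
  refine (isEquivalent_iff_tendsto_one ?_).1 (aseq_isEquivalent hδ k)
  filter_upwards [eventually_ge_atTop 1] with n hn
  have hn0 : (0 : ℝ) < n := by exact_mod_cast hn
  positivity

/-- `a_n^{(k)} = Γ(n+(1+δ)/(2+δ)) Γ(k+(1−k)/(2+δ)) / (Γ(k+(1+δ)/(2+δ)) Γ(n+(1−k)/(2+δ)))`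
for `n ≥ k`, and `a_n^{(k)} ∼ [Γ(k+(1−k)/(2+δ))/Γ(k+(1+δ)/(2+δ))] n^{(k+δ)/(2+δ)}`
as `n → ∞`. -/
theorem aseq_gamma_and_asymp (δ : ℝ) (hδ : -1 < δ) (k : ℕ) (hk : 1 ≤ k) :
    (∀ n : ℕ, k ≤ n →
      aseq δ k n
        = Real.Gamma (n + (1 + δ) / (2 + δ)) * Real.Gamma (k + (1 - (k : ℝ)) / (2 + δ))
          / (Real.Gamma (k + (1 + δ) / (2 + δ)) * Real.Gamma (n + (1 - (k : ℝ)) / (2 + δ)))) ∧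
    Tendsto
      (fun n : ℕ =>
        aseq δ k n
          / ((Real.Gamma (k + (1 - (k : ℝ)) / (2 + δ)) / Real.Gamma (k + (1 + δ) / (2 + δ)))
              * (n : ℝ) ^ (((k : ℝ) + δ) / (2 + δ))))
      atTop (nhds 1) :=
  aseq_gamma_and_asymp_general δ hδ k
end

section
/- In the preferential attachment model, for every k ≥ 3 and n ≥ k, almost surely E(N_{n+1}(k) | F_n) = (1 − (k+δ)/(n(2+δ)+(1+δ))) N_n(k) + ((k−1+δ)/(n(2+δ)+(1+δ))) N_n(k−1). -/
/-!
Given `F n`, node `n + 1` attaches to the old node `v` with probability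
`(D n v + δ) / (n (2 + δ) + (1 + δ))`. A node `v ≤ n` has degree `k` in `G (n + 1)` iff it had
degree `k` and was not chosen, or had degree `k - 1` and was chosen, while the new node has degree
`1` or `2`, never `k ≥ 3`. Since the degree events are `F n`-measurable, they factor out of the
conditional expectation, which leaves the attachment probabilities; summing over `v` gives the
recursion.
-/

open MeasureTheory ProbabilityTheory Filter Finset

namespace PAModel

variable {Ω : Type} {mΩ : MeasurableSpace Ω} {μ : Measure Ω} {δ : ℝ} (M : PAModel mΩ μ δ)

theorem N_eq_sum_indicator (n k : ℕ) :
    M.N n k = ∑ v ∈ Icc 1 n, {ω | M.D n v ω = k}.indicator (fun _ => (1 : ℝ)) := by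
  funext ω
  simp [N, Finset.sum_apply, Set.indicator_apply]

theorem measurableSet_degree_eq (n v j : ℕ) : MeasurableSet[M.F n] {ω | M.D n v ω = j} :=
  M.D_meas n v (measurableSet_singleton j)

theorem degree_new_ne {n k : ℕ} (hn : 1 ≤ n) (hk : 3 ≤ k) (ω : Ω) :
    M.D (n + 1) (n + 1) ω ≠ k := by
  rw [M.D_succ_new n ω hn]
  split_ifs <;> omega

theorem indicator_degree_succ_eq {n v k : ℕ} (hv1 : 1 ≤ v) (hvn : v ≤ n) (hk : 1 ≤ k) :
    {ω | M.D (n + 1) v ω = k}.indicator (fun _ => (1 : ℝ))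
      = {ω | M.D n v ω = k}.indicator (fun _ => 1)
        - {ω | M.D n v ω = k}.indicator ({ω | M.C n ω = v}.indicator fun _ => 1)
        + {ω | M.D n v ω = k - 1}.indicator ({ω | M.C n ω = v}.indicator fun _ => 1) := by
  funext ω
  have hD := M.D_succ_old n v ω hv1 hvn
  by_cases hC : M.C n ω = v <;>
    by_cases hcur : M.D n v ω = k <;>
    by_cases hprev : M.D n v ω = k - 1 <;>
    simp [Set.indicator_apply, hC, hcur, hprev, hD] <;> omega

theorem integrable_indicator_degree [IsFiniteMeasure μ] (n v j : ℕ) :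
    Integrable ({ω | M.D n v ω = j}.indicator fun _ => (1 : ℝ)) μ :=
  (integrable_const 1).indicator (M.F.le n _ (M.measurableSet_degree_eq n v j))

theorem integrable_indicator_attach [IsFiniteMeasure μ] (n v : ℕ) :
    Integrable ({ω | M.C n ω = v}.indicator fun _ => (1 : ℝ)) μ :=
  (integrable_const 1).indicator
    ((M.C_meas n).mono (M.F.le (n + 1)) le_rfl (measurableSet_singleton v))

theorem condExp_indicator_degree_attach [IsFiniteMeasure μ] {n v : ℕ} (hv1 : 1 ≤ v)
    (hvn : v ≤ n) (j : ℕ) :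
    μ[{ω | M.D n v ω = j}.indicator ({ω | M.C n ω = v}.indicator fun _ => (1 : ℝ)) | M.F n]
      =ᵐ[μ] fun ω => ((j : ℝ) + δ) / (n * (2 + δ) + (1 + δ))
        * {ω | M.D n v ω = j}.indicator (fun _ => 1) ω := by
  filter_upwards [condExp_indicator (M.integrable_indicator_attach n v)
      (M.measurableSet_degree_eq n v j), M.attach_prob n v hv1 hvn] with ω hind hprob
  rw [hind]
  by_cases hj : M.D n v ω = j
  · simp [hj, hprob]
  · simp [hj]

theorem condExp_indicator_degree_succ [IsFiniteMeasure μ] {n v k : ℕ} (hv1 : 1 ≤ v)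
    (hvn : v ≤ n) (hk : 1 ≤ k) :
    μ[{ω | M.D (n + 1) v ω = k}.indicator (fun _ => (1 : ℝ)) | M.F n]
      =ᵐ[μ] fun ω => (1 - ((k : ℝ) + δ) / (n * (2 + δ) + (1 + δ)))
          * {ω | M.D n v ω = k}.indicator (fun _ => 1) ω
        + (((k : ℝ) - 1 + δ) / (n * (2 + δ) + (1 + δ)))
          * {ω | M.D n v ω = k - 1}.indicator (fun _ => 1) ω := by
  have hint : ∀ j, Integrable
      ({ω | M.D n v ω = j}.indicator ({ω | M.C n ω = v}.indicator fun _ => (1 : ℝ))) μ :=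
    fun j => (M.integrable_indicator_attach n v).indicator
      (M.F.le n _ (M.measurableSet_degree_eq n v j))
  have hself : μ[{ω | M.D n v ω = k}.indicator (fun _ => (1 : ℝ)) | M.F n]
      = {ω | M.D n v ω = k}.indicator (fun _ => 1) :=
    condExp_of_stronglyMeasurable (M.F.le n)
      (stronglyMeasurable_const.indicator (M.measurableSet_degree_eq n v k))
      (M.integrable_indicator_degree n v k)
  rw [M.indicator_degree_succ_eq hv1 hvn hk]
  filter_upwards [condExp_add ((M.integrable_indicator_degree n v k).sub (hint k)) (hint (k - 1)) _,
    condExp_sub (M.integrable_indicator_degree n v k) (hint k) _,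
    M.condExp_indicator_degree_attach hv1 hvn k,
    M.condExp_indicator_degree_attach hv1 hvn (k - 1)] with ω hadd hsub hk₀ hk₁
  simp only [Pi.add_apply, Pi.sub_apply] at hadd hsub
  rw [hadd, hsub, hself, hk₀, hk₁, Nat.cast_sub hk, Nat.cast_one]
  ring

end PAModel

theorem condexp_N_k_succ_general {Ω : Type} {mΩ : MeasurableSpace Ω} {μ : Measure Ω}
    [IsProbabilityMeasure μ] {δ : ℝ} (M : PAModel mΩ μ δ)
    (k n : ℕ) (hk : 3 ≤ k) (hn : k ≤ n) :
    μ[M.N (n + 1) k | M.F n]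
      =ᵐ[μ] fun ω =>
        (1 - ((k : ℝ) + δ) / (n * (2 + δ) + (1 + δ))) * M.N n k ω
          + (((k : ℝ) - 1 + δ) / (n * (2 + δ) + (1 + δ))) * M.N n (k - 1) ω := by
  have hn1 : 1 ≤ n := by omega
  have hnew : {ω | M.D (n + 1) (n + 1) ω = k}.indicator (fun _ => (1 : ℝ)) = 0 :=
    funext fun ω => by simp [M.degree_new_ne hn1 hk ω]
  have hterm := fun v (hv : v ∈ Icc 1 n) => M.condExp_indicator_degree_succ
    (mem_Icc.mp hv).1 (mem_Icc.mp hv).2 (by omega : 1 ≤ k)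
  rw [M.N_eq_sum_indicator, Finset.sum_Icc_succ_top (by omega), hnew, add_zero]
  refine (condExp_finsetSum (fun v _ => M.integrable_indicator_degree (n + 1) v k) _).trans
    ((eventuallyEq_sum hterm).trans (EventuallyEq.of_eq ?_))
  funext ω
  simp only [Finset.sum_apply, M.N_eq_sum_indicator, Finset.sum_add_distrib, ← Finset.mul_sum]

/-- In the preferential attachment model, for every `k ≥ 3` and `n ≥ k`, almost surely
`E(N_{n+1}(k) | F_n) = (1 − (k+δ)/(n(2+δ)+(1+δ))) N_n(k)
  + ((k−1+δ)/(n(2+δ)+(1+δ))) N_n(k−1)`. -/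
theorem condexp_N_k_succ {Ω : Type} {mΩ : MeasurableSpace Ω} {μ : Measure Ω}
    [IsProbabilityMeasure μ] {δ : ℝ} (hδ : -1 < δ) (M : PAModel mΩ μ δ)
    (k n : ℕ) (hk : 3 ≤ k) (hn : k ≤ n) :
    μ[M.N (n + 1) k | M.F n]
      =ᵐ[μ] fun ω =>
        (1 - ((k : ℝ) + δ) / (n * (2 + δ) + (1 + δ))) * M.N n k ω
          + (((k : ℝ) - 1 + δ) / (n * (2 + δ) + (1 + δ))) * M.N n (k - 1) ω :=
  condexp_N_k_succ_general M k n hk hn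
end

section
/- Fix δ > −1 and k ≥ 1. Let C_k be the k×k lower triangular matrix with entries c_{i,j} = b_j^{(i)} for j ≤ i and c_{i,j} = 0 for j > i, and let D_k be the k×k lower triangular matrix with entries d_{i,j} = (−1)^{i−j} b_j^{(i)} for j ≤ i and d_{i,j} = 0 for j > i. Then C_k is invertible and D_k = C_k^{−1}. -/
/-!
With `g i = Γ(i + 1 + δ)` (nonzero as `δ > -1`) we have
`b_{j+1}^{(i+1)} = g i · (-1)^{i-j}/(i-j)! · (g j)⁻¹`, so `C_k = G E(-1) G⁻¹` and
`D_k = G E(1) G⁻¹`, where `G = diag g` and `E(s)` is the lower triangular Toeplitz matrix with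
entries `s^{i-j}/(i-j)!`, i.e. `exp (s N)` for the nilpotent shift `N`. The binomial theorem
gives `E(s) E(t) = E(s + t)`, hence `C_k D_k = G E(0) G⁻¹ = 1`.
-/

open Finset Matrix

/-- `bcoef δ k j` is `b_j^{(k)} = (−1)^{k−j} Γ(k+δ)/((k−j)! Γ(j+δ))` for `j ≤ k`,
with the convention `b_j^{(k)} = 0` for `j > k`. -/
noncomputable def bcoef (δ : ℝ) (k j : ℕ) : ℝ :=
  if j ≤ k then
    (-1 : ℝ) ^ (k - j) * Real.Gamma (k + δ) / ((Nat.factorial (k - j)) * Real.Gamma (j + δ))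
  else 0

/-- `pk δ k` is the limiting degree frequency
`p_k = c(δ) Γ(k+δ)/Γ(k+3+2δ)` with `c(δ) = (2+δ)Γ(3+2δ)/Γ(1+δ)`, and `p_0 = 0`. -/
noncomputable def pk (δ : ℝ) (k : ℕ) : ℝ :=
  if k = 0 then 0
  else (2 + δ) * Real.Gamma (3 + 2 * δ) / Real.Gamma (1 + δ)
    * Real.Gamma (k + δ) / Real.Gamma (k + 3 + 2 * δ)

open scoped Nat

section
variable {K : Type*} [Field K]

theorem diagonal_inv_mul_diagonal {ι : Type*} [Fintype ι] [DecidableEq ι] {g : ι → K}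
    (hg : ∀ i, g i ≠ 0) : diagonal g⁻¹ * diagonal g = 1 := by
  rw [diagonal_mul_diagonal, ← diagonal_one]
  exact congrArg diagonal (funext fun i => inv_mul_cancel₀ (hg i))

variable (k : ℕ)

def expToeplitz (s : K) : Matrix (Fin k) (Fin k) K :=
  of fun i j => if (j : ℕ) ≤ i then s ^ (i - j : ℕ) / (i - j : ℕ)! else 0

theorem expToeplitz_zero : expToeplitz k (0 : K) = 1 := by
  ext i j
  rcases eq_or_ne i j with rfl | hij
  · simp [expToeplitz]
  · have hij' : (i : ℕ) ≠ j := Fin.val_ne_of_ne hij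
    simp only [expToeplitz, of_apply, one_apply_ne hij]
    split_ifs
    · rw [zero_pow (by omega), zero_div]
    · rfl

variable {k} [CharZero K]

theorem add_pow_div_factorial (s t : K) (n : ℕ) :
    (s + t) ^ n / n ! = ∑ m ∈ range (n + 1), s ^ (n - m) / (n - m)! * (t ^ m / m !) := by
  rw [add_comm, add_pow, sum_div]
  refine sum_congr rfl fun m hm => ?_
  have : (n ! : K) ≠ 0 := Nat.cast_ne_zero.mpr n.factorial_ne_zero
  rw [Nat.cast_choose K (Nat.lt_succ_iff.mp (mem_range.mp hm))]
  field_simp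

theorem expToeplitz_mul (s t : K) :
    expToeplitz k s * expToeplitz k t = expToeplitz k (s + t) := by
  ext i l
  let f : ℕ → K := fun j =>
    if j ≤ (i : ℕ) ∧ (l : ℕ) ≤ j then s ^ (i - j) / (i - j)! * (t ^ (j - l) / (j - l)!)
    else 0
  have hsupp : {j ∈ range k | j ≤ (i : ℕ) ∧ (l : ℕ) ≤ j} = Ico (l : ℕ) (i + 1) := by
    ext j
    simp only [mem_filter, mem_range, mem_Ico]
    omega
  calc (expToeplitz k s * expToeplitz k t) i l = ∑ j ∈ range k, f j := by
        simp only [mul_apply, expToeplitz, of_apply, ite_zero_mul_ite_zero]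
        exact Fin.sum_univ_eq_sum_range f k
    _ = ∑ m ∈ range (i + 1 - l), s ^ (i - l - m) / (i - l - m)! * (t ^ m / m !) := by
        rw [← sum_filter, hsupp, sum_Ico_eq_sum_range]
        refine sum_congr rfl fun m _ => ?_
        rw [Nat.add_sub_cancel_left, Nat.sub_sub]
    _ = expToeplitz k (s + t) i l := by
        simp only [expToeplitz, of_apply]
        split_ifs with hli
        · rw [Nat.sub_add_comm hli, add_pow_div_factorial]
        · rw [show (i : ℕ) + 1 - l = 0 by omega, sum_range_zero]

theorem diagonal_conj_expToeplitz_mul {g : Fin k → K} (hg : ∀ i, g i ≠ 0) (s t : K) :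
    diagonal g * expToeplitz k s * diagonal g⁻¹ *
        (diagonal g * expToeplitz k t * diagonal g⁻¹) =
      diagonal g * expToeplitz k (s + t) * diagonal g⁻¹ := by
  simp only [Matrix.mul_assoc]
  rw [← Matrix.mul_assoc (diagonal g⁻¹), diagonal_inv_mul_diagonal hg, Matrix.one_mul,
    ← Matrix.mul_assoc (expToeplitz k s), expToeplitz_mul]

end

theorem bcoef_add_one_add_one (δ : ℝ) {i j : ℕ} (hji : j ≤ i) :
    bcoef δ (i + 1) (j + 1) =
      Real.Gamma (i + 1 + δ) * ((-1) ^ (i - j) / (i - j)!) * (Real.Gamma (j + 1 + δ))⁻¹ := by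
  rw [bcoef, if_pos (by omega), Nat.add_sub_add_right]
  push_cast
  ring

theorem bcoef_matrix_eq_diagonal_conj (δ : ℝ) (k : ℕ) :
    (of fun i j : Fin k => if (j : ℕ) ≤ i then bcoef δ (i + 1) (j + 1) else 0) =
      diagonal (fun i : Fin k => Real.Gamma ((i : ℕ) + 1 + δ)) * expToeplitz k (-1) *
        diagonal (fun i : Fin k => Real.Gamma ((i : ℕ) + 1 + δ))⁻¹ := by
  ext i j
  simp only [of_apply, mul_diagonal, diagonal_mul, expToeplitz, Pi.inv_apply]
  split_ifs with hji
  · exact bcoef_add_one_add_one δ hji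
  · simp

theorem signed_bcoef_matrix_eq_diagonal_conj (δ : ℝ) (k : ℕ) :
    (of fun i j : Fin k =>
        if (j : ℕ) ≤ i then (-1 : ℝ) ^ (i - j : ℕ) * bcoef δ (i + 1) (j + 1) else 0) =
      diagonal (fun i : Fin k => Real.Gamma ((i : ℕ) + 1 + δ)) * expToeplitz k 1 *
        diagonal (fun i : Fin k => Real.Gamma ((i : ℕ) + 1 + δ))⁻¹ := by
  ext i j
  simp only [of_apply, mul_diagonal, diagonal_mul, expToeplitz, Pi.inv_apply]
  split_ifs with hji
  · have hsign : (-1 : ℝ) ^ ((i : ℕ) - j) * ((-1) ^ ((i : ℕ) - j) / ((i : ℕ) - j)!) =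
        1 ^ ((i : ℕ) - j) / ((i : ℕ) - j)! := by
      rw [← mul_div_assoc, ← mul_pow]
      norm_num
    rw [bcoef_add_one_add_one δ hji, ← hsign]
    ring
  · simp

theorem bcoef_matrix_inverse_general (δ : ℝ) (hδ : -1 < δ) (k : ℕ) :
    IsUnit (Matrix.of fun i j : Fin k =>
        if (j : ℕ) ≤ (i : ℕ) then bcoef δ ((i : ℕ) + 1) ((j : ℕ) + 1) else 0) ∧
    (Matrix.of fun i j : Fin k =>
        if (j : ℕ) ≤ (i : ℕ) then bcoef δ ((i : ℕ) + 1) ((j : ℕ) + 1) else 0)⁻¹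
      = Matrix.of fun i j : Fin k =>
          if (j : ℕ) ≤ (i : ℕ) then
            (-1 : ℝ) ^ ((i : ℕ) - (j : ℕ)) * bcoef δ ((i : ℕ) + 1) ((j : ℕ) + 1)
          else 0 := by
  rw [bcoef_matrix_eq_diagonal_conj, signed_bcoef_matrix_eq_diagonal_conj]
  set g : Fin k → ℝ := fun i => Real.Gamma ((i : ℕ) + 1 + δ)
  have hg : ∀ i, g i ≠ 0 := fun i =>
    (Real.Gamma_pos_of_pos (by linarith [(Nat.cast_nonneg i : (0 : ℝ) ≤ (i : ℕ))])).ne'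
  have hCD : diagonal g * expToeplitz k (-1) * diagonal g⁻¹ *
      (diagonal g * expToeplitz k 1 * diagonal g⁻¹) = 1 := by
    rw [diagonal_conj_expToeplitz_mul hg, neg_add_cancel, expToeplitz_zero, Matrix.mul_one]
    exact mul_eq_one_comm.mp (diagonal_inv_mul_diagonal hg)
  exact ⟨(isUnit_iff_isUnit_det _).mpr (isUnit_det_of_right_inverse hCD),
    inv_eq_right_inv hCD⟩

/-- The `k×k` lower triangular matrix `C_k` with entries `c_{i,j} = b_j^{(i)}` for
`j ≤ i` (and `0` above the diagonal; rows/columns are indexed by `1,…,k`) is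
invertible, and its inverse is the lower triangular matrix `D_k` with entries
`d_{i,j} = (−1)^{i−j} b_j^{(i)}` for `j ≤ i`. -/
theorem bcoef_matrix_inverse (δ : ℝ) (hδ : -1 < δ) (k : ℕ) (hk : 1 ≤ k) :
    IsUnit (Matrix.of fun i j : Fin k =>
        if (j : ℕ) ≤ (i : ℕ) then bcoef δ ((i : ℕ) + 1) ((j : ℕ) + 1) else 0) ∧
    (Matrix.of fun i j : Fin k =>
        if (j : ℕ) ≤ (i : ℕ) then bcoef δ ((i : ℕ) + 1) ((j : ℕ) + 1) else 0)⁻¹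
      = Matrix.of fun i j : Fin k =>
          if (j : ℕ) ≤ (i : ℕ) then
            (-1 : ℝ) ^ ((i : ℕ) - (j : ℕ)) * bcoef δ ((i : ℕ) + 1) ((j : ℕ) + 1)
          else 0 :=
  bcoef_matrix_inverse_general δ hδ k
end
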